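/- Fix a positive integer m and let B = (b_1, ..., b_n) be a Ferrers board. For each column index i let ρ_i = b_i - ⌊b_i⌋_m, and partition the column indices into zones, where a zone z = [s, t] is a maximal interval of indices on which ⌊b_i⌋_m is constant; set ρ_z = Σ_{k=s}^{t} ρ_k. Then for every real number x, p_m(B, x) = Π_{i=1}^{n} c_i, where c_i = x + ⌊b_i⌋_m - (i-1)m + ρ_z if i is the last index of its zone z, and c_i = x + ⌊b_i⌋_m - (i-1)m otherwise. -/

import Mathlib

open scoped Classical

/-- The falling factorial `x↓ₖ = ∏_{i=0}^{k-1} (x - i)`. -/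
noncomputable def ffall (x : ℝ) (k : ℕ) : ℝ := ∏ i ∈ Finset.range k, (x - i)

/-- The `m`-falling factorial `x↓_{k,m} = ∏_{i=0}^{k-1} (x - m·i)`. -/
noncomputable def mfall (x : ℝ) (m k : ℕ) : ℝ := ∏ i ∈ Finset.range k, (x - m * i)

/-- The predicate that `b 0 ≤ b 1 ≤ ... ≤ b (n-1)`, i.e. the column heights of a
Ferrers board with `n` columns are weakly increasing.  (Column `i`, for `0 ≤ i < n`,
corresponds to column `i+1` = `b_{i+1}` of the paper.) -/
def FerrersMono (n : ℕ) (b : ℕ → ℕ) : Prop := ∀ i, i + 1 < n → b i ≤ b (i + 1)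

/-- The cells of the Ferrers board with column heights `b 0, …, b (n-1)`:
pairs `(i, j)` with `i < n` (a column, 0-indexed) and `1 ≤ j ≤ b i` (a row, 1-indexed). -/
def cellFinset (n : ℕ) (b : ℕ → ℕ) : Finset (ℕ × ℕ) :=
  (Finset.range n ×ˢ Finset.Icc 1 ((Finset.range n).sup b)).filter fun p => p.2 ≤ b p.1

/-- The file placements of `k` rooks on the board: `k` cells, no two in the same column. -/
def filePlacements (n : ℕ) (b : ℕ → ℕ) (k : ℕ) : Finset (Finset (ℕ × ℕ)) :=
  (cellFinset n b).powerset.filter fun P =>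
    P.card = k ∧ ∀ p ∈ P, ∀ q ∈ P, p ≠ q → p.1 ≠ q.1

/-- The `k`-th rook number `r_k(B)`: the number of placements of `k` cells of the board,
no two in the same row or column. -/
def rookNum (n : ℕ) (b : ℕ → ℕ) (k : ℕ) : ℕ :=
  ((cellFinset n b).powerset.filter fun P =>
    P.card = k ∧ ∀ p ∈ P, ∀ q ∈ P, p ≠ q → p.1 ≠ q.1 ∧ p.2 ≠ q.2).card

/-- The (0-indexed) level of the (1-indexed) row `j`: level `t` (0-indexed) consists of
rows `t*m + 1, …, t*m + m`. -/
def levelOf (m j : ℕ) : ℕ := (j - 1) / m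

/-- The `k`-th `m`-level rook number `r_{k,m}(B)`: the number of placements of `k` cells
of the board, no two in the same column or in the same level. -/
def mLevelRookNum (m n : ℕ) (b : ℕ → ℕ) (k : ℕ) : ℕ :=
  ((cellFinset n b).powerset.filter fun P =>
    P.card = k ∧ ∀ p ∈ P, ∀ q ∈ P, p ≠ q →
      p.1 ≠ q.1 ∧ levelOf m p.2 ≠ levelOf m q.2).card

/-- A placement has no two cells in the same level. -/
def NoLevelRepeat (m : ℕ) (F : Finset (ℕ × ℕ)) : Prop :=
  ∀ p ∈ F, ∀ q ∈ F, p ≠ q → levelOf m p.2 ≠ levelOf m q.2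

/-- The `m`-weight of a file placement `F`: the product over all rows `j` of
`1↓_{f_j, m}` where `f_j` is the number of cells of `F` in row `j`.  (Rows containing
no cell of `F` contribute `1↓_{0,m} = 1`, so it suffices to take the product over the
rows meeting `F`.) -/
noncomputable def wtm (m : ℕ) (F : Finset (ℕ × ℕ)) : ℝ :=
  ∏ j ∈ F.image Prod.snd, mfall 1 m ((F.filter fun p => p.2 = j).card)

/-- The `k`-th `m`-weighted file placement number `f_{k,m}(B)`. -/
noncomputable def fWeightNum (m n : ℕ) (b : ℕ → ℕ) (k : ℕ) : ℝ :=
  ∑ F ∈ filePlacements n b k, wtm m F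

/-- The `m`-floor of `b`: the largest multiple of `m` that is at most `b`. -/
def mfloor (m b : ℕ) : ℕ := m * (b / m)

/-- A singleton board (w.r.t. `m`): a Ferrers board such that whenever column `i` has
nonzero remainder mod `m`, the `m`-floor strictly increases at the next column. -/
def IsSingletonBoard (m n : ℕ) (b : ℕ → ℕ) : Prop :=
  FerrersMono n b ∧ ∀ i, i + 1 < n → b i - mfloor m (b i) ≠ 0 →
    mfloor m (b i) < mfloor m (b (i + 1))

/-- The cells of `F` lying in level `l` (0-indexed). -/
def rooksInLevel (m : ℕ) (F : Finset (ℕ × ℕ)) (l : ℕ) : Finset (ℕ × ℕ) :=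
  F.filter fun p => levelOf m p.2 = l

/-- `l` is the distinguished level of `F`: it contains at least two cells of `F`,
it has the fewest cells among all levels containing at least two cells of `F`,
and it is the lowest such level (any lower level with at least two cells of `F`
contains strictly more of them). -/
def DistinguishedLevel (m : ℕ) (F : Finset (ℕ × ℕ)) (l : ℕ) : Prop :=
  2 ≤ (rooksInLevel m F l).card ∧
  (∀ l', 2 ≤ (rooksInLevel m F l').card →
    (rooksInLevel m F l).card ≤ (rooksInLevel m F l').card) ∧
  (∀ l' < l, 2 ≤ (rooksInLevel m F l').card →
    (rooksInLevel m F l).card < (rooksInLevel m F l').card)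

/-- The class `𝓟(F₀)` of a file placement `F₀` with distinguished level `l`:
all file placements on the board with the same number of rooks as `F₀` which agree
with `F₀` outside level `l`, whose rooks in level `l` occupy the same columns as those
of `F₀`, and whose leftmost rook in level `l` occupies the same cell as the leftmost
rook of `F₀` in level `l`. -/
def classOf (m n : ℕ) (b : ℕ → ℕ) (l : ℕ) (F₀ : Finset (ℕ × ℕ)) :
    Finset (Finset (ℕ × ℕ)) :=
  (filePlacements n b F₀.card).filter fun F =>
    (F.filter fun p => levelOf m p.2 ≠ l) = (F₀.filter fun p => levelOf m p.2 ≠ l) ∧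
    (rooksInLevel m F l).image Prod.fst = (rooksInLevel m F₀ l).image Prod.fst ∧
    ∀ p ∈ rooksInLevel m F l, (∀ q ∈ rooksInLevel m F l, p.1 ≤ q.1) → p ∈ F₀


/-!
Add a column of height `h := b n` to the right of the board `B` on the first `n` columns. A rook
in the new column must avoid the levels of the `k` rooks already placed; each of them blocks the
`m` cells of its level in the new column, except a rook in the incomplete top level of that
column, which blocks only its `ρ = h - ⌊h⌋ₘ` cells, and there is at most one such rook. Hence
`r_{k+1}(B') = r_{k+1}(B) + (h - m k) r_k(B) + (m - ρ) (r_k(B) - r_k(B↓))`, where `B↓` is `B` cut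
down to height `⌊h⌋ₘ`, and so
`p_m(B', x) = (x + h - m n) p_m(B, x) + (m - ρ) (p_m(B, x) - p_m(B↓, x))`.
The zone product satisfies the same recursion: if the new column opens a zone then `B↓ = B`;
otherwise cutting down only removes the remainder `ρ_z` of the last zone of `B` from its last
factor `c + ρ_z`, and `(c - m + ρ) (c + ρ_z) + (m - ρ) ρ_z = c (c - m + ρ + ρ_z)`.
-/

open Finset

section Levels

variable {m : ℕ}

lemma mfloor_le (m c : ℕ) : mfloor m c ≤ c := Nat.mul_div_le c m

lemma lt_mfloor_add (hm : 0 < m) (c : ℕ) : c < mfloor m c + m := by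
  have := Nat.div_add_mod c m
  have := Nat.mod_lt c hm
  unfold mfloor
  omega

lemma mfloor_mono {c d : ℕ} (h : c ≤ d) : mfloor m c ≤ mfloor m d :=
  Nat.mul_le_mul_left m (Nat.div_le_div_right h)

lemma mfloor_mfloor (hm : 0 < m) (c : ℕ) : mfloor m (mfloor m c) = mfloor m c := by
  rw [mfloor, mfloor, Nat.mul_div_cancel_left _ hm]

lemma mfloor_add_le_of_lt {c d : ℕ} (h : mfloor m c < mfloor m d) :
    mfloor m c + m ≤ mfloor m d := by
  have := Nat.mul_le_mul_left m (Nat.lt_of_mul_lt_mul_left h)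
  rwa [Nat.mul_succ] at this

lemma min_mfloor_of_lt (hm : 0 < m) {c d : ℕ} (h : mfloor m c < mfloor m d) :
    min c (mfloor m d) = c :=
  min_eq_left (by have := lt_mfloor_add hm c; have := mfloor_add_le_of_lt h; omega)

lemma min_mfloor_of_eq {c d : ℕ} (h : mfloor m c = mfloor m d) :
    min c (mfloor m d) = mfloor m d :=
  min_eq_right (h ▸ mfloor_le m c)

lemma mfloor_min_mfloor (hm : 0 < m) {c d : ℕ} (h : mfloor m c ≤ mfloor m d) :
    mfloor m (min c (mfloor m d)) = mfloor m c := by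
  rcases h.lt_or_eq with hlt | heq
  · rw [min_mfloor_of_lt hm hlt]
  · rw [min_mfloor_of_eq heq, mfloor_mfloor hm, heq]

lemma levelOf_eq_iff (hm : 0 < m) {j l : ℕ} (hj : 1 ≤ j) :
    levelOf m j = l ↔ m * l + 1 ≤ j ∧ j ≤ m * l + m := by
  rw [levelOf, Nat.div_eq_iff hm, Nat.mul_comm l m]
  omega

lemma card_filter_levelOf_eq (hm : 0 < m) (h l : ℕ) :
    ((Icc 1 h).filter fun j => levelOf m j = l).card = min (m * l + m) h - m * l := by
  have : ((Icc 1 h).filter fun j => levelOf m j = l) = Icc (m * l + 1) (min (m * l + m) h) := by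
    ext j
    simp only [mem_filter, mem_Icc, le_min_iff]
    constructor
    · rintro ⟨⟨hj1, hj2⟩, hjl⟩
      have := (levelOf_eq_iff hm hj1).1 hjl
      omega
    · rintro ⟨hj1, hj2, hj3⟩
      exact ⟨⟨by omega, hj3⟩, (levelOf_eq_iff hm (by omega)).2 ⟨hj1, hj2⟩⟩
  rw [this, Nat.card_Icc]
  omega

/-- The rows above `⌊h⌋ₘ` form the only incomplete level of a column of height `h`. -/
lemma card_filter_levelOf_eq_levelOf (hm : 0 < m) {h r : ℕ} (hr : 1 ≤ r) (hrh : r ≤ h) :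
    ((Icc 1 h).filter fun j => levelOf m j = levelOf m r).card =
      if mfloor m h < r then h - mfloor m h else m := by
  obtain ⟨hl1, hl2⟩ := (levelOf_eq_iff hm hr).1 (rfl : levelOf m r = levelOf m r)
  have hh1 := mfloor_le m h
  have hh2 := lt_mfloor_add hm h
  rw [card_filter_levelOf_eq hm]
  generalize levelOf m r = l at *
  unfold mfloor at *
  split_ifs with hrF
  · have h1 : h / m < l + 1 := Nat.lt_of_mul_lt_mul_left (a := m) (by rw [Nat.mul_succ]; omega)
    have h2 : l < h / m + 1 := Nat.lt_of_mul_lt_mul_left (a := m) (by rw [Nat.mul_succ]; omega)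
    obtain rfl : l = h / m := by omega
    omega
  · have hlt : l < h / m := Nat.lt_of_mul_lt_mul_left (a := m) (by omega)
    have := Nat.mul_le_mul_left m hlt
    rw [Nat.mul_succ] at this
    omega

end Levels

section FreeRows

variable {m : ℕ}

def freeRows (m h : ℕ) (P : Finset (ℕ × ℕ)) : Finset ℕ :=
  (Icc 1 h).filter fun j => ∀ p ∈ P, levelOf m j ≠ levelOf m p.2

lemma card_freeRows (hm : 0 < m) {h : ℕ} {P : Finset (ℕ × ℕ)} (hP : NoLevelRepeat m P)
    (hrows : ∀ p ∈ P, 1 ≤ p.2 ∧ p.2 ≤ h) :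
    ((freeRows m h P).card : ℤ) = h - m * P.card +
      (m - (h - mfloor m h)) * (if ∃ p ∈ P, mfloor m h < p.2 then 1 else 0) := by
  set K := P.biUnion fun p => (Icc 1 h).filter fun j => levelOf m j = levelOf m p.2
  have hfree : freeRows m h P = Icc 1 h \ K := by
    ext j
    simp only [freeRows, K, mem_filter, mem_sdiff, mem_biUnion, not_exists, not_and]
    exact ⟨fun ⟨hj, hP⟩ => ⟨hj, fun p hp _ => hP p hp⟩,
      fun ⟨hj, hP⟩ => ⟨hj, fun p hp => hP p hp hj⟩⟩
  have hKsub : K ⊆ Icc 1 h := biUnion_subset.2 fun _ _ => filter_subset _ _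
  have hKcard : K.card = ∑ p ∈ P, if mfloor m h < p.2 then h - mfloor m h else m := by
    rw [card_biUnion fun p hp q hq hpq => disjoint_filter.2 fun j _ hjp hjq =>
      hP p hp q hq hpq (hjp.symm.trans hjq)]
    exact sum_congr rfl fun p hp => card_filter_levelOf_eq_levelOf hm (hrows p hp).1 (hrows p hp).2
  -- two rooks above `⌊h⌋ₘ` would share the top level of the column
  have htop : (P.filter fun p => mfloor m h < p.2).card =
      if ∃ p ∈ P, mfloor m h < p.2 then 1 else 0 := by
    split_ifs with hex
    · obtain ⟨p, hp, hpF⟩ := hex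
      refine le_antisymm (card_le_one.2 fun q hq r hr => ?_)
        (card_pos.2 ⟨p, mem_filter.2 ⟨hp, hpF⟩⟩)
      rw [mem_filter] at hq hr
      by_contra hqr
      refine hP q hq.1 r hr.1 hqr ?_
      have hlevel : ∀ s ∈ P, mfloor m h < s.2 → levelOf m s.2 = h / m := fun s hs hsF =>
        (levelOf_eq_iff hm (hrows s hs).1).2
          ⟨hsF, ((hrows s hs).2.trans_lt (lt_mfloor_add hm h)).le⟩
      rw [hlevel q hq.1 hq.2, hlevel r hr.1 hr.2]
    · exact card_eq_zero.2 (filter_eq_empty_iff.2 fun p hp hpF => hex ⟨p, hp, hpF⟩)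
  have hsplit := card_filter_add_card_filter_not (s := P) (p := fun p => mfloor m h < p.2)
  have hcount := card_sdiff_add_card_eq_card hKsub
  rw [← hfree, Nat.card_Icc, Nat.add_sub_cancel, hKcard, sum_ite, sum_const, sum_const,
    smul_eq_mul, smul_eq_mul, htop] at hcount
  rw [htop] at hsplit
  have hFh := mfloor_le m h
  split_ifs at hcount hsplit ⊢ <;>
  · zify [hFh] at hcount hsplit
    linear_combination hcount - (m : ℤ) * hsplit

end FreeRows

lemma FerrersMono.le_of_le {n : ℕ} {b : ℕ → ℕ} (hb : FerrersMono n b) {i j : ℕ} (hij : i ≤ j)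
    (hj : j < n) : b i ≤ b j := by
  induction j, hij using Nat.le_induction with
  | base => exact le_rfl
  | succ j _ ih => exact (ih (by omega)).trans (hb j hj)

section Placements

variable {m n k : ℕ} {b : ℕ → ℕ}

lemma mem_cellFinset {p : ℕ × ℕ} : p ∈ cellFinset n b ↔ p.1 < n ∧ 1 ≤ p.2 ∧ p.2 ≤ b p.1 := by
  simp only [cellFinset, mem_filter, mem_product, mem_range, mem_Icc]
  exact ⟨fun ⟨⟨h1, h2, _⟩, h3⟩ => ⟨h1, h2, h3⟩,
    fun ⟨h1, h2, h3⟩ => ⟨⟨h1, h2, h3.trans (le_sup (mem_range.2 h1))⟩, h3⟩⟩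

def mLevelPlacements (m n : ℕ) (b : ℕ → ℕ) (k : ℕ) : Finset (Finset (ℕ × ℕ)) :=
  (cellFinset n b).powerset.filter fun P =>
    P.card = k ∧ ∀ p ∈ P, ∀ q ∈ P, p ≠ q → p.1 ≠ q.1 ∧ levelOf m p.2 ≠ levelOf m q.2

lemma mLevelRookNum_eq_card : mLevelRookNum m n b k = (mLevelPlacements m n b k).card := rfl

lemma mem_mLevelPlacements {P : Finset (ℕ × ℕ)} :
    P ∈ mLevelPlacements m n b k ↔ (∀ p ∈ P, p.1 < n ∧ 1 ≤ p.2 ∧ p.2 ≤ b p.1) ∧ P.card = k ∧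
      ∀ p ∈ P, ∀ q ∈ P, p ≠ q → p.1 ≠ q.1 ∧ levelOf m p.2 ≠ levelOf m q.2 := by
  simp only [mLevelPlacements, mem_filter, mem_powerset, subset_iff, mem_cellFinset]

lemma mLevelRookNum_zero : mLevelRookNum m n b 0 = 1 := by
  rw [mLevelRookNum_eq_card, card_eq_one]
  refine ⟨∅, eq_singleton_iff_unique_mem.2 ⟨?_, fun P hP => ?_⟩⟩
  · simp [mem_mLevelPlacements]
  · exact card_eq_zero.1 (mem_mLevelPlacements.1 hP).2.1

lemma mLevelRookNum_eq_zero_of_lt (h : n < k) : mLevelRookNum m n b k = 0 := by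
  rw [mLevelRookNum_eq_card, card_eq_zero, eq_empty_iff_forall_notMem]
  intro P hP
  obtain ⟨hcells, hcard, hdistinct⟩ := mem_mLevelPlacements.1 hP
  have : P.card ≤ (range n).card :=
    card_le_card_of_injOn Prod.fst (fun p hp => mem_range.2 (hcells p hp).1)
      fun p hp q hq hpq => by_contra fun hne => (hdistinct p hp q hq hne).1 hpq
  rw [hcard, card_range] at this
  omega

lemma filter_mLevelPlacements_row_le (c : ℕ) :
    (mLevelPlacements m n b k).filter (fun P => ∀ p ∈ P, p.2 ≤ c) =
      mLevelPlacements m n (fun i => min (b i) c) k := by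
  ext P
  simp only [mem_filter, mem_mLevelPlacements, le_min_iff]
  constructor
  · rintro ⟨⟨hcells, hrest⟩, hc⟩
    exact ⟨fun p hp => ⟨(hcells p hp).1, (hcells p hp).2.1, (hcells p hp).2.2, hc p hp⟩, hrest⟩
  · rintro ⟨hcells, hrest⟩
    exact ⟨⟨fun p hp => ⟨(hcells p hp).1, (hcells p hp).2.1, (hcells p hp).2.2.1⟩, hrest⟩,
      fun p hp => (hcells p hp).2.2.2⟩

lemma filter_mLevelPlacements_succ_avoiding :
    (mLevelPlacements m (n + 1) b k).filter (fun P => ¬ ∃ p ∈ P, p.1 = n) =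
      mLevelPlacements m n b k := by
  ext P
  simp only [mem_filter, mem_mLevelPlacements, not_exists, not_and]
  constructor
  · rintro ⟨⟨hcells, hrest⟩, havoid⟩
    exact ⟨fun p hp => ⟨by have := (hcells p hp).1; have := havoid p hp; omega,
      (hcells p hp).2⟩, hrest⟩
  · rintro ⟨hcells, hrest⟩
    exact ⟨⟨fun p hp => ⟨by have := (hcells p hp).1; omega, (hcells p hp).2⟩, hrest⟩,
      fun p hp => by have := (hcells p hp).1; omega⟩

lemma card_filter_mLevelPlacements_succ_meeting :
    ((mLevelPlacements m (n + 1) b (k + 1)).filter fun P => ∃ p ∈ P, p.1 = n).card =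
      ∑ P ∈ mLevelPlacements m n b k, (freeRows m (b n) P).card := by
  rw [← card_sigma]
  refine (card_bij (fun x _ => insert (n, x.2) x.1) ?_ ?_ ?_).symm
  · rintro ⟨P, j⟩ hPj
    obtain ⟨hP, hj⟩ := mem_sigma.1 hPj
    obtain ⟨hcells, hcard, hdistinct⟩ := mem_mLevelPlacements.1 hP
    simp only [freeRows, mem_filter, mem_Icc] at hj
    have hnotin : (n, j) ∉ P := fun h => (hcells _ h).1.false
    refine mem_filter.2 ⟨mem_mLevelPlacements.2 ⟨?_, ?_, ?_⟩, ⟨(n, j), mem_insert_self _ _, rfl⟩⟩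
    · simp only [mem_insert, forall_eq_or_imp]
      exact ⟨⟨n.lt_succ_self, hj.1⟩, fun p hp => ⟨(hcells p hp).1.trans n.lt_succ_self,
        (hcells p hp).2⟩⟩
    · rw [card_insert_of_notMem hnotin, hcard]
    · simp only [mem_insert, forall_eq_or_imp]
      refine ⟨⟨fun h => absurd rfl h, fun q hq _ => ⟨(hcells q hq).1.ne', hj.2 q hq⟩⟩,
        fun p hp => ⟨fun _ => ⟨(hcells p hp).1.ne, (hj.2 p hp).symm⟩, hdistinct p hp⟩⟩
  · rintro ⟨P, j⟩ hPj ⟨P', j'⟩ hPj' heq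
    have hcol : ∀ Q ∈ mLevelPlacements m n b k, ∀ p ∈ Q, p.1 ≠ n := fun Q hQ p hp =>
      ((mem_mLevelPlacements.1 hQ).1 p hp).1.ne
    have hP := hcol P (mem_sigma.1 hPj).1
    have hP' := hcol P' (mem_sigma.1 hPj').1
    have hrestrict : ∀ (Q : Finset (ℕ × ℕ)) i, (∀ p ∈ Q, p.1 ≠ n) →
        (insert (n, i) Q).filter (fun p => p.1 ≠ n) = Q := fun Q i hQ => by
      rw [filter_insert, if_neg (by simp), filter_true_of_mem hQ]
    have hPP : P = P' := by
      simpa only [hrestrict P j hP, hrestrict P' j' hP'] using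
        congrArg (filter fun p : ℕ × ℕ => p.1 ≠ n) heq
    have hjj : j = j' := by
      have : (n, j) ∈ insert (n, j') P' := heq ▸ mem_insert_self _ _
      rcases mem_insert.1 this with h | h
      · exact (Prod.ext_iff.1 h).2
      · exact absurd rfl (hP' _ h)
    subst hPP hjj
    rfl
  · intro Q hQ
    obtain ⟨hQ, p₀, hp₀, hcol⟩ := mem_filter.1 hQ
    obtain ⟨hcells, hcard, hdistinct⟩ := mem_mLevelPlacements.1 hQ
    refine ⟨⟨Q.erase p₀, p₀.2⟩, mem_sigma.2 ⟨mem_mLevelPlacements.2 ⟨?_, ?_, ?_⟩, ?_⟩, ?_⟩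
    · intro q hq
      have hne := (hdistinct q (mem_of_mem_erase hq) p₀ hp₀ (ne_of_mem_erase hq)).1
      have := hcells q (mem_of_mem_erase hq)
      exact ⟨by omega, this.2⟩
    · rw [card_erase_of_mem hp₀, hcard, Nat.add_sub_cancel]
    · exact fun p hp q hq => hdistinct p (mem_of_mem_erase hp) q (mem_of_mem_erase hq)
    · simp only [freeRows, mem_filter, mem_Icc]
      refine ⟨⟨(hcells p₀ hp₀).2.1, hcol ▸ (hcells p₀ hp₀).2.2⟩, fun q hq => ?_⟩
      exact (hdistinct p₀ hp₀ q (mem_of_mem_erase hq) (ne_of_mem_erase hq).symm).2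
    · change insert (n, p₀.2) (Q.erase p₀) = Q
      rw [← hcol, insert_erase hp₀]

end Placements

section Recurrence

variable {m n : ℕ} {b : ℕ → ℕ}

lemma mLevelRookNum_succ (hm : 0 < m) (hb : FerrersMono (n + 1) b) (k : ℕ) :
    (mLevelRookNum m (n + 1) b (k + 1) : ℤ) =
      mLevelRookNum m n b (k + 1) + (b n - m * k) * mLevelRookNum m n b k +
        (m - (b n - mfloor m (b n))) *
          (mLevelRookNum m n b k - mLevelRookNum m n (fun i => min (b i) (mfloor m (b n))) k) := by
  set F := mfloor m (b n)
  have hfree : ∀ P ∈ mLevelPlacements m n b k, ((freeRows m (b n) P).card : ℤ) =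
      b n - m * k + (m - (b n - F)) * (if ∃ p ∈ P, F < p.2 then 1 else 0) := by
    intro P hP
    obtain ⟨hcells, hcard, hdistinct⟩ := mem_mLevelPlacements.1 hP
    rw [card_freeRows hm (fun p hp q hq hpq => (hdistinct p hp q hq hpq).2) fun p hp =>
      ⟨(hcells p hp).2.1, (hcells p hp).2.2.trans (hb.le_of_le (hcells p hp).1.le n.lt_succ_self)⟩,
      hcard]
  have hcolumn := card_filter_add_card_filter_not (s := mLevelPlacements m (n + 1) b (k + 1))
    (p := fun P => ∃ p ∈ P, p.1 = n)
  rw [card_filter_mLevelPlacements_succ_meeting, filter_mLevelPlacements_succ_avoiding] at hcolumn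
  have htop := card_filter_add_card_filter_not (s := mLevelPlacements m n b k)
    (p := fun P => ∃ p ∈ P, F < p.2)
  simp only [not_exists, not_and, not_lt] at htop
  rw [filter_mLevelPlacements_row_le] at htop
  simp only [mLevelRookNum_eq_card, ← hcolumn, Nat.cast_add, Nat.cast_sum, sum_congr rfl hfree,
    sum_add_distrib, sum_const, nsmul_eq_mul, ← mul_sum, sum_boole]
  rw [← Nat.cast_inj (R := ℤ), Nat.cast_add] at htop
  linear_combination (↑m - (↑(b n) - ↑F) : ℤ) * htop

end Recurrence

section Polynomial

variable {m n : ℕ}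

lemma mfall_succ (x : ℝ) (m k : ℕ) : mfall x m (k + 1) = mfall x m k * (x - m * k) :=
  prod_range_succ _ _

lemma sum_mul_mfall_of_recurrence {x β c : ℝ} {r r' t : ℕ → ℝ} (h0 : r' 0 = r 0)
    (hn : r (n + 1) = 0)
    (hrec : ∀ k, r' (k + 1) = r (k + 1) + (β - m * k) * r k + c * (r k - t k)) :
    ∑ k ∈ range (n + 2), r' k * mfall x m (n + 1 - k) =
      (x + β - m * n) * ∑ k ∈ range (n + 1), r k * mfall x m (n - k) +
        c * (∑ k ∈ range (n + 1), r k * mfall x m (n - k) -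
          ∑ k ∈ range (n + 1), t k * mfall x m (n - k)) := by
  have hshift : ∑ k ∈ range (n + 1), r k * mfall x m (n + 1 - k) =
      r 0 * mfall x m (n + 1) + ∑ k ∈ range (n + 1), r (k + 1) * mfall x m (n - k) := by
    have := (sum_range_succ' (fun k => r k * mfall x m (n + 1 - k)) (n + 1)).symm.trans
      (sum_range_succ _ _)
    simp only [Nat.add_sub_add_right, hn, zero_mul, add_zero] at this
    linear_combination -this
  have hfactor : ∀ k ∈ range (n + 1), (x + β - m * n) * (r k * mfall x m (n - k)) =
      r k * mfall x m (n + 1 - k) + (β - m * k) * r k * mfall x m (n - k) := by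
    intro k hk
    have hkn : k ≤ n := Nat.lt_succ_iff.1 (mem_range.1 hk)
    rw [Nat.sub_add_comm hkn, mfall_succ, Nat.cast_sub hkn]
    ring
  rw [sum_range_succ', h0, mul_sum, sum_congr rfl hfactor]
  simp only [hrec, Nat.add_sub_add_right, Nat.sub_zero, add_mul, sub_mul, mul_sub, mul_assoc,
    sum_add_distrib, sum_sub_distrib, mul_sum]
  linear_combination -hshift

noncomputable def mLevelRookPoly (m n : ℕ) (b : ℕ → ℕ) (x : ℝ) : ℝ :=
  ∑ k ∈ range (n + 1), (mLevelRookNum m n b k : ℝ) * mfall x m (n - k)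

lemma mLevelRookPoly_succ (hm : 0 < m) {b : ℕ → ℕ} (hb : FerrersMono (n + 1) b) (x : ℝ) :
    mLevelRookPoly m (n + 1) b x =
      (x + b n - m * n) * mLevelRookPoly m n b x + (m - (b n - mfloor m (b n))) *
        (mLevelRookPoly m n b x - mLevelRookPoly m n (fun i => min (b i) (mfloor m (b n))) x) :=
  sum_mul_mfall_of_recurrence (by simp only [mLevelRookNum_zero])
    (by rw [mLevelRookNum_eq_zero_of_lt n.lt_succ_self, Nat.cast_zero])
    fun k => by exact_mod_cast mLevelRookNum_succ hm hb k

end Polynomial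

section ZoneProduct

variable {m n i : ℕ} {b : ℕ → ℕ} {x : ℝ}

lemma FerrersMono.mfloor_le_of_le (hb : FerrersMono n b) {i j : ℕ} (hij : i ≤ j) (hj : j < n) :
    mfloor m (b i) ≤ mfloor m (b j) :=
  mfloor_mono (hb.le_of_le hij hj)

lemma FerrersMono.truncate (hb : FerrersMono n b) (c : ℕ) : FerrersMono n fun i => min (b i) c :=
  fun i hi => min_le_min_right c (hb i hi)

lemma FerrersMono.mfloor_truncate (hm : 0 < m) (hb : FerrersMono (n + 1) b) {k : ℕ} (hk : k ≤ n) :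
    mfloor m (min (b k) (mfloor m (b n))) = mfloor m (b k) :=
  mfloor_min_mfloor hm (hb.mfloor_le_of_le hk n.lt_succ_self)

noncomputable def zoneRemainder (m n : ℕ) (b : ℕ → ℕ) (i : ℕ) : ℝ :=
  ∑ k ∈ (range n).filter fun k => mfloor m (b k) = mfloor m (b i), ((b k : ℝ) - mfloor m (b k))

lemma zoneRemainder_succ_of_ne (h : mfloor m (b n) ≠ mfloor m (b i)) :
    zoneRemainder m (n + 1) b i = zoneRemainder m n b i := by
  rw [zoneRemainder, range_add_one, filter_insert, if_neg h, zoneRemainder]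

lemma zoneRemainder_succ_self :
    zoneRemainder m (n + 1) b n = zoneRemainder m n b n + ((b n : ℝ) - mfloor m (b n)) := by
  rw [zoneRemainder, range_add_one, filter_insert, if_pos rfl,
    sum_insert fun h => (mem_range.1 (mem_filter.1 h).1).false, add_comm, zoneRemainder]

lemma zoneRemainder_truncate_of_lt (hm : 0 < m) (hb : FerrersMono (n + 1) b) (hi : i ≤ n)
    (h : mfloor m (b i) < mfloor m (b n)) :
    zoneRemainder m n (fun j => min (b j) (mfloor m (b n))) i = zoneRemainder m n b i := by
  unfold zoneRemainder
  rw [hb.mfloor_truncate hm hi, filter_congr fun k hk => by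
    rw [hb.mfloor_truncate hm (mem_range.1 hk).le]]
  exact sum_congr rfl fun k hk => by
    beta_reduce
    rw [min_mfloor_of_lt hm ((mem_filter.1 hk).2.trans_lt h)]

lemma zoneRemainder_truncate_of_eq (hm : 0 < m) (hb : FerrersMono (n + 1) b)
    (h : mfloor m (b i) = mfloor m (b n)) :
    zoneRemainder m n (fun j => min (b j) (mfloor m (b n))) i = 0 := by
  refine sum_eq_zero fun k hk => ?_
  obtain ⟨hk, hki⟩ := mem_filter.1 hk
  rw [hb.mfloor_truncate hm (mem_range.1 hk).le, mfloor_min_mfloor hm h.le, h] at hki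
  beta_reduce
  rw [min_mfloor_of_eq hki, mfloor_mfloor hm, sub_self]

lemma FerrersMono.mfloor_lt_of_zoneEnd (hb : FerrersMono (n + 1) b) (hi : i < n)
    (h : i + 1 < n ∨ mfloor m (b i) < mfloor m (b n))
    (hend : i + 1 = n ∨ mfloor m (b (i + 1)) ≠ mfloor m (b i)) :
    mfloor m (b i) < mfloor m (b n) := by
  rcases hend with hend | hend
  · exact h.resolve_left (by omega)
  · exact (lt_of_le_of_ne (hb.mfloor_le_of_le i.le_succ (by omega)) (Ne.symm hend)).trans_le
      (hb.mfloor_le_of_le hi n.lt_succ_self)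

noncomputable def zoneFactor (m n : ℕ) (b : ℕ → ℕ) (x : ℝ) (i : ℕ) : ℝ :=
  if i + 1 = n ∨ mfloor m (b (i + 1)) ≠ mfloor m (b i) then
    x + mfloor m (b i) - m * i + zoneRemainder m n b i
  else
    x + mfloor m (b i) - m * i

noncomputable def zoneProd (m n : ℕ) (b : ℕ → ℕ) (x : ℝ) : ℝ :=
  ∏ i ∈ range n, zoneFactor m n b x i

lemma zoneFactor_succ (hb : FerrersMono (n + 1) b) (hi : i < n)
    (h : i + 1 < n ∨ mfloor m (b i) < mfloor m (b n)) :
    zoneFactor m (n + 1) b x i = zoneFactor m n b x i := by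
  have hend : (i + 1 = n + 1 ∨ mfloor m (b (i + 1)) ≠ mfloor m (b i)) ↔
      (i + 1 = n ∨ mfloor m (b (i + 1)) ≠ mfloor m (b i)) := by
    refine ⟨fun h' => Or.inr (h'.resolve_left (by omega)), fun h' => Or.inr ?_⟩
    rcases h' with rfl | h'
    · exact (h.resolve_left (lt_irrefl _)).ne'
    · exact h'
  unfold zoneFactor
  rw [if_congr hend rfl rfl]
  split_ifs with hC
  · rw [zoneRemainder_succ_of_ne (hb.mfloor_lt_of_zoneEnd hi h hC).ne']
  · rfl

lemma zoneFactor_truncate (hm : 0 < m) (hb : FerrersMono (n + 1) b) (hi : i < n)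
    (h : i + 1 < n ∨ mfloor m (b i) < mfloor m (b n)) :
    zoneFactor m n (fun j => min (b j) (mfloor m (b n))) x i = zoneFactor m n b x i := by
  unfold zoneFactor
  rw [hb.mfloor_truncate hm hi.le, hb.mfloor_truncate hm hi]
  split_ifs with hC
  · rw [zoneRemainder_truncate_of_lt hm hb hi.le (hb.mfloor_lt_of_zoneEnd hi h hC)]
  · rfl

lemma zoneProd_truncate_of_forall_lt (hm : 0 < m) (hb : FerrersMono (n + 1) b)
    (hnew : ∀ i < n, mfloor m (b i) < mfloor m (b n)) :
    zoneProd m n (fun j => min (b j) (mfloor m (b n))) x = zoneProd m n b x :=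
  prod_congr rfl fun i hi =>
    zoneFactor_truncate hm hb (mem_range.1 hi) (Or.inr (hnew i (mem_range.1 hi)))

lemma zoneProd_succ_of_forall_lt (hb : FerrersMono (n + 1) b)
    (hnew : ∀ i < n, mfloor m (b i) < mfloor m (b n)) :
    zoneProd m (n + 1) b x = (x + b n - m * n) * zoneProd m n b x := by
  have hrem : zoneRemainder m n b n = 0 :=
    sum_eq_zero fun k hk => absurd (mem_filter.1 hk).2 (hnew k (mem_range.1 (mem_filter.1 hk).1)).ne
  rw [zoneProd, prod_range_succ, prod_congr rfl fun i hi =>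
    zoneFactor_succ hb (mem_range.1 hi) (Or.inr (hnew i (mem_range.1 hi))), zoneFactor,
    if_pos (Or.inl rfl), zoneRemainder_succ_self, hrem, zoneProd]
  ring

/-- When the new column joins the zone of column `n`, truncation changes only the last factor of
`zoneProd m (n + 1)`, removing the zone's remainder from it. -/
lemma zoneProd_succ_succ_of_eq (hm : 0 < m) (hb : FerrersMono (n + 1 + 1) b)
    (hzone : mfloor m (b n) = mfloor m (b (n + 1))) :
    zoneProd m (n + 1 + 1) b x = (x + b (n + 1) - m * (n + 1 : ℕ)) * zoneProd m (n + 1) b x +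
      (m - (b (n + 1) - mfloor m (b (n + 1)))) * (zoneProd m (n + 1) b x -
        zoneProd m (n + 1) (fun j => min (b j) (mfloor m (b (n + 1)))) x) := by
  set Q := ∏ i ∈ range n, zoneFactor m (n + 1) b x i
  have hprod : zoneProd m (n + 1 + 1) b x =
      Q * zoneFactor m (n + 1 + 1) b x n * zoneFactor m (n + 1 + 1) b x (n + 1) := by
    rw [zoneProd, prod_range_succ, prod_range_succ, prod_congr rfl fun i hi =>
      zoneFactor_succ hb (by have := mem_range.1 hi; omega)
        (Or.inl (by have := mem_range.1 hi; omega))]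
  have hprod' : zoneProd m (n + 1) (fun j => min (b j) (mfloor m (b (n + 1)))) x =
      Q * zoneFactor m (n + 1) (fun j => min (b j) (mfloor m (b (n + 1)))) x n := by
    rw [zoneProd, prod_range_succ, prod_congr rfl fun i hi =>
      zoneFactor_truncate hm hb (by have := mem_range.1 hi; omega)
        (Or.inl (by have := mem_range.1 hi; omega))]
  have hZ : zoneRemainder m (n + 1) b (n + 1) = zoneRemainder m (n + 1) b n := by
    rw [zoneRemainder, zoneRemainder, hzone]
  have hinner : zoneFactor m (n + 1 + 1) b x n = x + mfloor m (b n) - m * n :=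
    if_neg (by simp [hzone])
  have hlast : zoneFactor m (n + 1 + 1) b x (n + 1) = x + mfloor m (b (n + 1)) - m * (n + 1 : ℕ) +
      (zoneRemainder m (n + 1) b n + (b (n + 1) - mfloor m (b (n + 1)))) := by
    rw [zoneFactor, if_pos (Or.inl rfl), zoneRemainder_succ_self, hZ]
  have hold : zoneFactor m (n + 1) b x n =
      x + mfloor m (b n) - m * n + zoneRemainder m (n + 1) b n :=
    if_pos (Or.inl rfl)
  have htrunc : zoneFactor m (n + 1) (fun j => min (b j) (mfloor m (b (n + 1)))) x n =
      x + mfloor m (b n) - m * n := by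
    rw [zoneFactor, if_pos (Or.inl rfl), zoneRemainder_truncate_of_eq hm hb hzone, add_zero,
      hb.mfloor_truncate hm n.le_succ]
  rw [hprod, hprod', zoneProd, prod_range_succ, hinner, hlast, hold, htrunc, ← hzone]
  push_cast
  ring

lemma zoneProd_succ (hm : 0 < m) (hb : FerrersMono (n + 1) b) :
    zoneProd m (n + 1) b x = (x + b n - m * n) * zoneProd m n b x +
      (m - (b n - mfloor m (b n))) *
        (zoneProd m n b x - zoneProd m n (fun j => min (b j) (mfloor m (b n))) x) := by
  by_cases hnew : ∀ i < n, mfloor m (b i) < mfloor m (b n)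
  · rw [zoneProd_succ_of_forall_lt hb hnew, zoneProd_truncate_of_forall_lt hm hb hnew, sub_self,
      mul_zero, add_zero]
  · obtain ⟨i, hi, hFi⟩ : ∃ i < n, mfloor m (b n) ≤ mfloor m (b i) := by simpa using hnew
    obtain ⟨n, rfl⟩ : ∃ n', n = n' + 1 := ⟨n - 1, by omega⟩
    exact zoneProd_succ_succ_of_eq hm hb (le_antisymm (hb.mfloor_le_of_le n.le_succ (by omega))
      (hFi.trans (hb.mfloor_le_of_le (by omega) (by omega))))

end ZoneProduct

theorem mLevelRookPoly_eq_zoneProd {m : ℕ} (hm : 0 < m) (x : ℝ) :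
    ∀ {n : ℕ} {b : ℕ → ℕ}, FerrersMono n b → mLevelRookPoly m n b x = zoneProd m n b x
  | 0, _, _ => by simp [mLevelRookPoly, zoneProd, mLevelRookNum_zero, mfall]
  | n + 1, b, hb => by
    have hb' : FerrersMono n b := fun i hi => hb i (by omega)
    rw [mLevelRookPoly_succ hm hb, zoneProd_succ hm hb, mLevelRookPoly_eq_zoneProd hm x hb',
      mLevelRookPoly_eq_zoneProd hm x (hb'.truncate _)]

/-- zone factorization.  For a Ferrers board `B = (b_1, …, b_n)`,
`p_m(B,x) = ∏_{i=1}^n c_i`, where `c_i = x + ⌊b_i⌋_m - (i-1)m + ρ_z` if `i` is the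
last index of its zone `z`, and `c_i = x + ⌊b_i⌋_m - (i-1)m` otherwise.  Here (since the
column heights are weakly increasing) the zone of a column `i` is the set of columns with
the same `m`-floor, `i` is last in its zone iff `i` is the last column or the `m`-floor
strictly increases at the next column, and `ρ_z` is the sum over the zone of the
remainders `ρ_k = b_k - ⌊b_k⌋_m`. -/
theorem statement2 (m : ℕ) (hm : 0 < m) (n : ℕ) (b : ℕ → ℕ)
    (hb : FerrersMono n b) (x : ℝ) :
    ∑ k ∈ Finset.range (n + 1), (mLevelRookNum m n b k : ℝ) * mfall x m (n - k) =
      ∏ i ∈ Finset.range n,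
        (if i + 1 = n ∨ mfloor m (b (i + 1)) ≠ mfloor m (b i) then
          x + (mfloor m (b i) : ℝ) - (m : ℝ) * (i : ℝ) +
            ∑ k ∈ (Finset.range n).filter fun k => mfloor m (b k) = mfloor m (b i),
              ((b k : ℝ) - (mfloor m (b k) : ℝ))
        else
          x + (mfloor m (b i) : ℝ) - (m : ℝ) * (i : ℝ)) :=
  mLevelRookPoly_eq_zoneProd hm x hb
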